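/- Let κ < λ be regular cardinals with λ = μ⁺, μ singular of cofinality κ, let ⟨λ_i : i < κ⟩ be a strictly increasing sequence of regular cardinals > κ cofinal in μ, and let ⟨f_α : α < λ⟩ be a scale witnessing λ = tcf(∏_{i<κ} λ_i / J^{bd}_κ). For δ < λ with δ < min(t_δ), let env(t_δ) be the envelope of a finite-or-small set t_δ with |t_δ| < κ, and define g^{min}_δ(i) = min{f_γ(i) : γ ∈ env(t_δ)} and g^{max}_δ(i) = sup{f_γ(i)+1 : γ ∈ env(t_δ)}. Then: (1) f_δ =_{J^{bd}_κ} g^{min}_δ; (2) g^{min}_δ(i) ≤ g^{max}_δ(i) for all i < κ; (3) there exists δ′ > δ such that g^{max}_δ ≤_{J^{bd}_κ} g^{min}_{δ′}. -/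

import Mathlib

/-- `gMin f env δ i = min{f γ i : γ ∈ env δ}`. -/
noncomputable def gMin (f : Ordinal.{0} → Ordinal.{0} → Ordinal.{0})
    (env : Ordinal.{0} → Set Ordinal.{0}) (δ i : Ordinal.{0}) : Ordinal.{0} :=
  sInf {x | ∃ γ ∈ env δ, x = f γ i}

/-- `gMax f env δ i = sup{f γ i + 1 : γ ∈ env δ}`. -/
noncomputable def gMax (f : Ordinal.{0} → Ordinal.{0} → Ordinal.{0})
    (env : Ordinal.{0} → Set Ordinal.{0}) (δ i : Ordinal.{0}) : Ordinal.{0} :=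
  sSup {x | ∃ γ ∈ env δ, x = f γ i + 1}


lemma exists_bound_aux (c : Cardinal.{0}) (T : Set Ordinal.{0})
    (hT : Cardinal.mk T < Cardinal.lift.{1} c.ord.cof)
    (h : ∀ x ∈ T, x < c.ord) : ∃ b, b < c.ord ∧ ∀ x ∈ T, x ≤ b := by
  obtain ⟨c0, hc0⟩ := Cardinal.mem_range_lift_of_le hT.le
  have hmkeq : Cardinal.mk T = Cardinal.mk (ULift.{1} c0.out) := by
    rw [Cardinal.mk_uLift, Cardinal.mk_out, hc0]
  obtain ⟨e⟩ := Cardinal.eq.1 hmkeq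
  set F : c0.out → Ordinal.{0} := fun x => ((e.symm ⟨x⟩ : T) : Ordinal) with hF
  have hcard : Cardinal.mk c0.out < c.ord.cof := by
    have : Cardinal.lift.{1} (Cardinal.mk c0.out) < Cardinal.lift.{1} c.ord.cof := by
      rw [Cardinal.mk_out, hc0]; exact hT
    exact Cardinal.lift_lt.1 this
  have hsup : iSup F < c.ord :=
    Ordinal.iSup_lt_ord hcard (fun x => h _ (e.symm ⟨x⟩).2)
  refine ⟨iSup F, hsup, fun x hx => ?_⟩
  have : F (e ⟨x, hx⟩).down = x := by
    show ((e.symm ⟨(e ⟨x, hx⟩).down⟩ : T) : Ordinal) = x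
    have h2 : (⟨(e ⟨x, hx⟩).down⟩ : ULift.{1} c0.out) = e ⟨x, hx⟩ := rfl
    rw [h2, Equiv.symm_apply_apply]
  calc x = F (e ⟨x, hx⟩).down := this.symm
    _ ≤ iSup F := Ordinal.le_iSup F _

lemma gMin_eq_aux (mu kappa : Cardinal.{0}) (hreg : kappa.IsRegular)
    (f : Ordinal.{0} → Ordinal.{0} → Ordinal.{0})
    (hincr : ∀ α β, α < β → β < (Order.succ mu).ord →
      ∃ i₀ < kappa.ord, ∀ j, i₀ ≤ j → j < kappa.ord → f α j < f β j)
    (env : Ordinal.{0} → Set Ordinal.{0})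
    (henv : ∀ δ < (Order.succ mu).ord, δ ∈ env δ ∧
      env δ ⊆ Set.Ico δ (Order.succ mu).ord ∧
      Cardinal.mk (env δ) < Cardinal.lift.{1} kappa) :
    ∀ δ < (Order.succ mu).ord,
      ∃ i₀ < kappa.ord, ∀ i, i₀ ≤ i → i < kappa.ord → f δ i = gMin f env δ i := by
  intro δ hδ
  obtain ⟨hmem, hsub, hcard⟩ := henv δ hδ
  have hkpos : (0 : Ordinal) < kappa.ord := by
    have := Cardinal.ord_lt_ord.2 hreg.pos
    rwa [Cardinal.ord_zero] at this
  have hch : ∀ γ : env δ, ∃ i₀, i₀ < kappa.ord ∧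
      ∀ j, i₀ ≤ j → j < kappa.ord → f δ j ≤ f (γ : Ordinal) j := by
    rintro ⟨γ, hγ⟩
    rcases eq_or_lt_of_le (hsub hγ).1 with he | hl
    · exact ⟨0, hkpos, fun j _ _ => le_of_eq (congrFun (congrArg f he) j)⟩
    · obtain ⟨i₀, h1, h2⟩ := hincr δ γ hl (hsub hγ).2
      exact ⟨i₀, h1, fun j hj hjk => (h2 j hj hjk).le⟩
  choose I hI1 hI2 using hch
  obtain ⟨b, hb, hble⟩ := exists_bound_aux kappa (Set.range I)
    (by
      rw [hreg.cof_eq]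
      exact lt_of_le_of_lt Cardinal.mk_range_le hcard)
    (by rintro x ⟨γ, rfl⟩; exact hI1 γ)
  refine ⟨b, hb, fun i hbi hik => ?_⟩
  apply le_antisymm
  · refine le_csInf ⟨f δ i, δ, hmem, rfl⟩ ?_
    rintro x ⟨γ, hγ, rfl⟩
    exact hI2 ⟨γ, hγ⟩ i (le_trans (hble _ (Set.mem_range_self _)) hbi) hik
  · exact csInf_le (OrderBot.bddBelow _) ⟨δ, hmem, rfl⟩

/-- Properties of `g^min_δ` and `g^max_δ` for a scale `⟨f_α : α < μ⁺⟩` on `∏ λ_i / J^bd_κ`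
and envelopes `env δ ⊆ [δ, μ⁺)` of cardinality `< κ` containing `δ`. -/
theorem gMin_gMax_properties (mu kappa : Cardinal.{0})
    (hreg : kappa.IsRegular) (hcof : (mu.ord).cof = kappa) (hsing : kappa < mu)
    (lamseq : Ordinal.{0} → Cardinal.{0})
    (hls : ∀ i < kappa.ord, (lamseq i).IsRegular ∧ kappa < lamseq i ∧ lamseq i < mu)
    (hlsmono : ∀ i j, i < j → j < kappa.ord → lamseq i < lamseq j)
    (hlscof : ∀ ρ : Cardinal.{0}, ρ < mu → ∃ i < kappa.ord, ρ < lamseq i)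
    (f : Ordinal.{0} → Ordinal.{0} → Ordinal.{0})
    (hf : ∀ α < (Order.succ mu).ord, ∀ i < kappa.ord, f α i < (lamseq i).ord)
    (hincr : ∀ α β, α < β → β < (Order.succ mu).ord →
      ∃ i₀ < kappa.ord, ∀ j, i₀ ≤ j → j < kappa.ord → f α j < f β j)
    (hcofinal : ∀ g : Ordinal.{0} → Ordinal.{0},
      (∀ i < kappa.ord, g i < (lamseq i).ord) →
      ∃ α < (Order.succ mu).ord, ∃ i₀ < kappa.ord,
        ∀ j, i₀ ≤ j → j < kappa.ord → g j < f α j)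
    (env : Ordinal.{0} → Set Ordinal.{0})
    (henv : ∀ δ < (Order.succ mu).ord, δ ∈ env δ ∧
      env δ ⊆ Set.Ico δ (Order.succ mu).ord ∧
      Cardinal.mk (env δ) < Cardinal.lift.{1} kappa) :
    ∀ δ < (Order.succ mu).ord,
      (∃ i₀ < kappa.ord, ∀ i, i₀ ≤ i → i < kappa.ord → f δ i = gMin f env δ i) ∧
      (∀ i < kappa.ord, gMin f env δ i ≤ gMax f env δ i) ∧
      (∃ δ', δ < δ' ∧ δ' < (Order.succ mu).ord ∧
        ∃ i₀ < kappa.ord, ∀ i, i₀ ≤ i → i < kappa.ord →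
          gMax f env δ i ≤ gMin f env δ' i) := by
  intro δ hδ
  obtain ⟨hmem, hsub, hcard⟩ := henv δ hδ
  -- limits
  have hlimlam : ∀ i < kappa.ord, Order.IsSuccLimit ((lamseq i).ord) := fun i hi =>
    Cardinal.isSuccLimit_ord ((hls i hi).1.aleph0_le)
  have hsucc_lt : ∀ γ ∈ env δ, ∀ i < kappa.ord, f γ i + 1 < (lamseq i).ord := by
    intro γ hγ i hi
    rw [Ordinal.add_one_eq_succ]
    exact (hlimlam i hi).succ_lt (hf γ (hsub hγ).2 i hi)
  -- gMax bounded above pointwise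
  have hbddT : ∀ i < kappa.ord, (lamseq i).ord ∈ upperBounds {x | ∃ γ ∈ env δ, x = f γ i + 1} := by
    rintro i hi x ⟨γ, hγ, rfl⟩
    exact (hsucc_lt γ hγ i hi).le
  have part2 : ∀ i < kappa.ord, gMin f env δ i ≤ gMax f env δ i := by
    intro i hi
    have h1 : gMin f env δ i ≤ f δ i := csInf_le (OrderBot.bddBelow _) ⟨δ, hmem, rfl⟩
    have h2 : f δ i + 1 ≤ gMax f env δ i :=
      le_csSup ⟨(lamseq i).ord, hbddT i hi⟩ ⟨δ, hmem, rfl⟩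
    exact h1.trans (le_trans (le_self_add (a := f δ i) (b := 1)) h2)
  refine ⟨gMin_eq_aux mu kappa hreg f hincr env henv δ hδ, part2, ?_⟩
  -- part 3
  have hgmaxlt : ∀ i < kappa.ord, gMax f env δ i < (lamseq i).ord := by
    intro i hi
    have hTcard : Cardinal.mk {x | ∃ γ ∈ env δ, x = f γ i + 1} <
        Cardinal.lift.{1} ((lamseq i).ord).cof := by
      rw [(hls i hi).1.cof_eq]
      have him : {x | ∃ γ ∈ env δ, x = f γ i + 1} = (fun γ => f γ i + 1) '' (env δ) := by
        ext x; constructor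
        · rintro ⟨γ, hγ, rfl⟩; exact ⟨γ, hγ, rfl⟩
        · rintro ⟨γ, hγ, rfl⟩; exact ⟨γ, hγ, rfl⟩
      rw [him]
      exact lt_trans (lt_of_le_of_lt Cardinal.mk_image_le hcard)
        (Cardinal.lift_lt.2 (hls i hi).2.1)
    obtain ⟨b, hb, hble⟩ := exists_bound_aux (lamseq i) _ hTcard
      (by rintro x ⟨γ, hγ, rfl⟩; exact hsucc_lt γ hγ i hi)
    exact lt_of_le_of_lt (csSup_le ⟨f δ i + 1, δ, hmem, rfl⟩ hble) hb
  set g : Ordinal.{0} → Ordinal.{0} := fun i => if i < kappa.ord then gMax f env δ i else 0 with hg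
  obtain ⟨α, hα, i₀, hi₀, hgf⟩ := hcofinal g
    (by intro i hi; simpa [hg, if_pos hi] using hgmaxlt i hi)
  have hlim : Order.IsSuccLimit ((Order.succ mu).ord) :=
    Cardinal.isSuccLimit_ord (hreg.aleph0_le.trans (le_of_lt (hsing.trans_le (Order.le_succ mu))))
  set δ' : Ordinal := max α (δ + 1) with hδ'
  have hsucc1 : δ < δ + 1 := by
    rw [Ordinal.add_one_eq_succ]; exact Order.lt_succ δ
  have hδδ' : δ < δ' := lt_of_lt_of_le hsucc1 (le_max_right α (δ + 1))
  have hδ'lt : δ' < (Order.succ mu).ord := by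
    refine max_lt hα ?_
    rw [Ordinal.add_one_eq_succ]
    exact hlim.succ_lt hδ
  -- f α ≤ f δ' eventually
  have hαδ' : ∃ i₂ < kappa.ord, ∀ j, i₂ ≤ j → j < kappa.ord → f α j ≤ f δ' j := by
    rcases eq_or_lt_of_le (le_max_left α (δ + 1)) with he | hl
    · refine ⟨0, ?_, fun j _ _ => le_of_eq (congrFun (congrArg f he) j)⟩
      have := Cardinal.ord_lt_ord.2 hreg.pos
      rwa [Cardinal.ord_zero] at this
    · obtain ⟨i₂, h1, h2⟩ := hincr α δ' hl hδ'lt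
      exact ⟨i₂, h1, fun j hj hjk => (h2 j hj hjk).le⟩
  obtain ⟨i₂, hi₂, hαle⟩ := hαδ'
  obtain ⟨i₁, hi₁, heq⟩ := gMin_eq_aux mu kappa hreg f hincr env henv δ' hδ'lt
  refine ⟨δ', hδδ', hδ'lt, max i₀ (max i₁ i₂), ?_, fun i hi hik => ?_⟩
  · exact max_lt hi₀ (max_lt hi₁ hi₂)
  · have h0 : i₀ ≤ i := le_trans (le_max_left _ _) hi
    have h1 : i₁ ≤ i := le_trans (le_trans (le_max_left _ _) (le_max_right _ _)) hi
    have h2 : i₂ ≤ i := le_trans (le_trans (le_max_right _ _) (le_max_right _ _)) hi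
    have := hgf i h0 hik
    rw [hg] at this
    simp only [if_pos hik] at this
    calc gMax f env δ i ≤ f α i := this.le
      _ ≤ f δ' i := hαle i h2 hik
      _ = gMin f env δ' i := heq i h1 hik
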